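/- arXiv:2605.22784 — 3 statements merged into one kernel-verified Lean document; each statement's English description precedes it below -/
import Mathlib

section
/- Let p be a prime and g : ℕ → ℤ an arithmetic function whose Bell exponents β(m) = (1/m)·Σ_{d∣m} μ(d) g(m/d) are integers satisfying β(m) ≡ 0 (mod p) for every m with p ∤ m. If a : ℕ → ℤ satisfies a(0) = 1 and n·a(n) = -Σ_{k=1}^{n} g(k)·a(n-k) for all n ≥ 1, then a(n) ≡ 0 (mod p) whenever p ∤ n. -/
open Finset ArithmeticFunction
open scoped ArithmeticFunction.Moebius

theorem congruence_inheritance (p : ℕ) (hp : p.Prime) (g : ℕ → ℤ)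
    (hβ : ∀ m : ℕ, 0 < m → ¬ p ∣ m →
      ((m : ℤ) * (p : ℤ)) ∣ ∑ d ∈ m.divisors, (μ d : ℤ) * g (m / d))
    (a : ℕ → ℤ) (ha0 : a 0 = 1)
    (hrec : ∀ n : ℕ, 1 ≤ n → (n : ℤ) * a n = -∑ k ∈ Finset.Icc 1 n, g k * a (n - k)) :
    ∀ n : ℕ, ¬ p ∣ n → (p : ℤ) ∣ a n := by
  have hpZ : Prime (p : ℤ) := Nat.prime_iff_prime_int.mp hp
  -- Möbius inversion: g n = ∑_{m | n} S m, where S m = ∑_{d | m} μ d * g (m/d)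
  have hinv : ∀ n > 0, ∑ m ∈ n.divisors, (∑ d ∈ m.divisors, (μ d : ℤ) * g (m / d)) = g n := by
    rw [sum_eq_iff_sum_mul_moebius_eq]
    intro n _
    exact Nat.sum_divisorsAntidiagonal (fun d e => (μ d : ℤ) * g e)
  -- hence p ∣ g n whenever p ∤ n, n > 0
  have hg : ∀ n : ℕ, 0 < n → ¬ p ∣ n → (p : ℤ) ∣ g n := by
    intro n hn hpn
    rw [← hinv n hn]
    refine Finset.dvd_sum fun m hm => ?_
    have hmn : m ∣ n := Nat.dvd_of_mem_divisors hm
    have hm0 : 0 < m := Nat.pos_of_mem_divisors hm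
    have hpm : ¬ p ∣ m := fun h => hpn (h.trans hmn)
    exact (dvd_mul_left (p : ℤ) (m : ℤ)).trans (hβ m hm0 hpm)
  intro n
  induction n using Nat.strong_induction_on with
  | _ n ih =>
    intro hpn
    have hn : 1 ≤ n := by
      rcases Nat.eq_zero_or_pos n with h | h
      · exact absurd (h ▸ dvd_zero p) hpn
      · exact h
    have hdvd : (p : ℤ) ∣ (n : ℤ) * a n := by
      rw [hrec n hn]
      refine dvd_neg.mpr (Finset.dvd_sum fun k hk => ?_)
      obtain ⟨hk1, hkn⟩ := Finset.mem_Icc.mp hk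
      by_cases hpk : p ∣ k
      · -- then p ∣ a (n - k)
        have hkne : k ≠ n := fun h => hpn (h ▸ hpk)
        have hlt : n - k < n := Nat.sub_lt (lt_of_lt_of_le Nat.zero_lt_one hn) hk1
        have hpnk : ¬ p ∣ (n - k) := by
          intro h
          exact hpn (by
            have : n = (n - k) + k := (Nat.sub_add_cancel hkn).symm
            rw [this]; exact Nat.dvd_add h hpk)
        exact Dvd.dvd.mul_left (ih (n - k) hlt hpnk) (g k)
      · exact Dvd.dvd.mul_right (hg k hk1 hpk) (a (n - k))
    rcases hpZ.dvd_mul.mp hdvd with h | h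
    · exact absurd (Int.natCast_dvd_natCast.mp h) hpn
    · exact h
end

section
/- Let p be a prime and g : ℕ → ℂ an arithmetic function whose Bell exponents β(m) = (1/m)·Σ_{d∣m} μ(d) g(m/d) vanish for every m with p ∤ m. If a : ℕ → ℂ satisfies a(0) = 1 and n·a(n) = -Σ_{k=1}^{n} g(k)·a(n-k) for all n ≥ 1, then a(n) = 0 whenever p ∤ n. -/
open Finset ArithmeticFunction
open scoped ArithmeticFunction.Moebius

theorem exact_vanishing (p : ℕ) (hp : p.Prime) (g : ℕ → ℂ)
    (hβ : ∀ m : ℕ, 0 < m → ¬ p ∣ m →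
      (1 / (m : ℂ)) * ∑ d ∈ m.divisors, (μ d : ℂ) * g (m / d) = 0)
    (a : ℕ → ℂ) (ha0 : a 0 = 1)
    (hrec : ∀ n : ℕ, 1 ≤ n → (n : ℂ) * a n = -∑ k ∈ Finset.Icc 1 n, g k * a (n - k)) :
    ∀ n : ℕ, ¬ p ∣ n → a n = 0 := by
  set G : ℕ → ℂ := fun m => ∑ d ∈ m.divisors, (μ d : ℂ) * g (m / d) with hGdef
  have hGzero : ∀ m : ℕ, 0 < m → ¬ p ∣ m → G m = 0 := by
    intro m hm hpm
    have := hβ m hm hpm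
    have hm' : (m : ℂ) ≠ 0 := Nat.cast_ne_zero.mpr hm.ne'
    field_simp at this
    simpa using this
  have hinv : ∀ n > 0, ∑ d ∈ n.divisors, G d = g n := by
    rw [sum_eq_iff_sum_mul_moebius_eq]
    intro n hn
    simp only [hGdef]
    exact Nat.sum_divisorsAntidiagonal (fun d e => (μ d : ℂ) * g e)
  have hg0 : ∀ k : ℕ, 0 < k → ¬ p ∣ k → g k = 0 := by
    intro k hk hpk
    rw [← hinv k hk]
    refine Finset.sum_eq_zero fun d hd => ?_
    have hd' := Nat.mem_divisors.mp hd
    exact hGzero d (Nat.pos_of_mem_divisors hd) fun h => hpk (h.trans hd'.1)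
  intro n
  induction n using Nat.strong_induction_on with
  | _ n ih =>
    intro hpn
    have hn : 1 ≤ n := by
      rcases Nat.eq_zero_or_pos n with h | h
      · exact absurd (h ▸ dvd_zero p) hpn
      · exact h
    have hsum : ∑ k ∈ Finset.Icc 1 n, g k * a (n - k) = 0 := by
      refine Finset.sum_eq_zero fun k hk => ?_
      obtain ⟨hk1, hkn⟩ := Finset.mem_Icc.mp hk
      by_cases hpk : p ∣ k
      · have hkn' : k ≠ n := fun h => hpn (h ▸ hpk)
        have hlt : n - k < n := Nat.sub_lt hn hk1
        have : ¬ p ∣ (n - k) := fun h => hpn (by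
          have := Nat.dvd_add h hpk
          rwa [Nat.sub_add_cancel hkn] at this)
        rw [ih (n - k) hlt this, mul_zero]
      · rw [hg0 k hk1 hpk, zero_mul]
    have := hrec n hn
    rw [hsum, neg_zero] at this
    have hn' : (n : ℂ) ≠ 0 := Nat.cast_ne_zero.mpr (by omega)
    exact (mul_eq_zero.mp this).resolve_left hn'
end

section
/- Let τ(n) be the coefficients of q·∏_{m≥1}(1-q^m)^{24} = Σ_{n≥1} τ(n) q^n. Then τ(n) ≡ 0 (mod 3) whenever n ≢ 1 (mod 3). -/
/-!
Modulo 3 the product is a cube, `∏ (1 - q^m)^24 = (∏ (1 - q^m)^8)^3`, and the cube of a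
polynomial over `ZMod 3` only involves the powers `q^(3k)` (Frobenius). Hence `τ(n)`, the
coefficient of `q^(n-1)`, vanishes modulo 3 unless `3 ∣ n - 1`.
-/

open Finset Polynomial

/-- Ramanujan's tau function: the coefficient of `q^n` in
`q * ∏_{m ≥ 1} (1 - q^m)^24`.  Since the factors with `m > n` do not affect
the coefficient of `q^{n-1}`, the product may be truncated at `m = n`. -/
noncomputable def ramanujanTau (n : ℕ) : ℤ :=
  (∏ m ∈ Finset.Icc 1 n, ((1 : Polynomial ℤ) - Polynomial.X ^ m) ^ 24).coeff (n - 1)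

theorem Polynomial.coeff_pow_card_eq_zero {p : ℕ} [Fact p.Prime] (f : (ZMod p)[X]) {k : ℕ}
    (hk : ¬p ∣ k) : (f ^ p).coeff k = 0 := by
  rw [← ZMod.expand_card, coeff_expand (Fact.out : p.Prime).pos, if_neg hk]

theorem ramanujanTau_intCast {R : Type*} [CommRing R] (n : ℕ) :
    (ramanujanTau n : R) = (∏ m ∈ Icc 1 n, ((1 : R[X]) - X ^ m) ^ 24).coeff (n - 1) := by
  rw [ramanujanTau, ← eq_intCast (Int.castRingHom R), ← coeff_map, Polynomial.map_prod]
  simp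

theorem tau_mod_three (n : ℕ) (hn : 1 ≤ n) (h : n % 3 ≠ 1) :
    (3 : ℤ) ∣ ramanujanTau n := by
  have hcube : ∏ m ∈ Icc 1 n, ((1 : (ZMod 3)[X]) - X ^ m) ^ 24
      = (∏ m ∈ Icc 1 n, ((1 : (ZMod 3)[X]) - X ^ m) ^ 8) ^ 3 := by
    rw [← prod_pow]
    simp only [← pow_mul]
  refine (ZMod.intCast_zmod_eq_zero_iff_dvd _ 3).mp ?_
  rw [ramanujanTau_intCast, hcube]
  exact coeff_pow_card_eq_zero _ (by omega)
end
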